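/- Let (G,X,H) be obtained from two disjoint degree-feasible configurations (G¹,X¹,H¹) and (G²,X²,H²) by merging vertices v¹ ∈ V(G¹) and v² ∈ V(G²) to a new vertex v*. Then (G,X,H) is minimal uncolorable if and only if both (G¹,X¹,H¹) and (G²,X²,H²) are minimal uncolorable. -/

import Mathlib

open Finset

noncomputable section
open scoped Classical

structure FinHypergraph (α : Type) where
  verts : Finset α
  edges : Finset ℕ
  inc : ℕ → Finset α
  inc_sub : ∀ e ∈ edges, inc e ⊆ verts
  inc_card : ∀ e ∈ edges, 2 ≤ (inc e).card

variable {α β : Type} [DecidableEq α] [DecidableEq β]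

namespace FinHypergraph

def degree (G : FinHypergraph α) (v : α) : ℕ :=
  (G.edges.filter (fun e => v ∈ G.inc e)).card

def maxDegree (G : FinHypergraph α) : ℕ := G.verts.sup G.degree

def mult (G : FinHypergraph α) (u v : α) : ℕ :=
  (G.edges.filter (fun e => G.inc e = {u, v})).card

def Adj (G : FinHypergraph α) (u v : α) : Prop :=
  u ≠ v ∧ ∃ e ∈ G.edges, u ∈ G.inc e ∧ v ∈ G.inc e

def Connected (G : FinHypergraph α) : Prop :=
  ∀ u ∈ G.verts, ∀ v ∈ G.verts, Relation.ReflTransGen G.Adj u v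

def IndepSet (H : FinHypergraph β) (S : Finset β) : Prop :=
  ∀ e ∈ H.edges, ¬ H.inc e ⊆ S

def eraseEdge (H : FinHypergraph β) (e₀ : ℕ) : FinHypergraph β where
  verts := H.verts
  edges := H.edges.erase e₀
  inc := H.inc
  inc_sub := fun e he => H.inc_sub e (Finset.mem_of_mem_erase he)
  inc_card := fun e he => H.inc_card e (Finset.mem_of_mem_erase he)

def induce (G : FinHypergraph α) (S : Finset α) : FinHypergraph α where
  verts := S
  edges := G.edges.filter (fun e => G.inc e ⊆ S)
  inc := G.inc
  inc_sub := fun e he => (Finset.mem_filter.mp he).2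
  inc_card := fun e he => G.inc_card e (Finset.mem_filter.mp he).1

def IsSub (G' G : FinHypergraph α) : Prop :=
  G'.verts ⊆ G.verts ∧ G'.edges ⊆ G.edges ∧ ∀ e ∈ G'.edges, G'.inc e = G.inc e

def shrink (G : FinHypergraph α) (v : α) : FinHypergraph α where
  verts := G.verts.erase v
  edges := G.edges.filter (fun e => 2 ≤ ((G.inc e).erase v).card)
  inc := fun e => (G.inc e).erase v
  inc_sub := by
    intro e he y hy
    rw [Finset.mem_erase] at hy ⊢
    exact ⟨hy.1, G.inc_sub e (Finset.mem_filter.mp he).1 hy.2⟩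
  inc_card := fun e he => (Finset.mem_filter.mp he).2

def nbhd (H : FinHypergraph β) (x : β) : Finset β :=
  H.verts.filter (fun y => ∃ e ∈ H.edges, H.inc e = {x, y})

def numComponents (G : FinHypergraph α) : ℕ :=
  (G.verts.image (fun v => G.verts.filter (fun u => Relation.ReflTransGen G.Adj v u))).card

def IsBridge (G : FinHypergraph α) (e : ℕ) : Prop :=
  numComponents (G.eraseEdge e) = numComponents G + ((G.inc e).card - 1)

def IsSepVertex (G : FinHypergraph α) (v : α) : Prop :=
  ∃ A B : Finset α, A ∪ B = G.verts ∧ A ∩ B = {v} ∧ 2 ≤ A.card ∧ 2 ≤ B.card ∧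
    ∀ e ∈ G.edges, G.inc e ⊆ A ∨ G.inc e ⊆ B

def IsBlock (G : FinHypergraph α) (S : Finset α) : Prop :=
  S ⊆ G.verts ∧ (G.induce S).Connected ∧ (∀ v, ¬ IsSepVertex (G.induce S) v) ∧
    ∀ S' : Finset α, S ⊆ S' → S' ⊆ G.verts → (G.induce S').Connected →
      (∀ v, ¬ IsSepVertex (G.induce S') v) → S' = S

end FinHypergraph

open FinHypergraph

def IsCover (G : FinHypergraph α) (X : α → Finset β) (H : FinHypergraph β) : Prop :=
  (∀ u ∈ G.verts, ∀ v ∈ G.verts, u ≠ v → Disjoint (X u) (X v)) ∧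
  H.verts = G.verts.biUnion X ∧
  (∀ v ∈ G.verts, H.IndepSet (X v)) ∧
  ∃ M : ℕ → Finset ℕ,
    (∀ e ∈ G.edges,
      M e ⊆ H.edges ∧
      (∀ e' ∈ M e, (∀ v ∈ G.inc e, (H.inc e' ∩ X v).card = 1) ∧
        H.inc e' ⊆ (G.inc e).biUnion X) ∧
      ∀ e₁ ∈ M e, ∀ e₂ ∈ M e, e₁ ≠ e₂ → Disjoint (H.inc e₁) (H.inc e₂)) ∧
    H.edges = G.edges.biUnion M

def HasIT (H : FinHypergraph β) (Vs : Finset α) (X : α → Finset β) : Prop :=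
  ∃ T : Finset β, H.IndepSet T ∧ ∀ v ∈ Vs, (T ∩ X v).card = 1

def MinUncol (H : FinHypergraph β) (Vs : Finset α) (X : α → Finset β) : Prop :=
  ¬ HasIT H Vs X ∧ ∀ e ∈ H.edges, HasIT (H.eraseEdge e) Vs X

def DPColorableAt (G : FinHypergraph α) (k : ℕ) : Prop :=
  ∀ (X : α → Finset ℕ) (H : FinHypergraph ℕ),
    IsCover G X H → (∀ v ∈ G.verts, k ≤ (X v).card) → HasIT H G.verts X

def chiDP (G : FinHypergraph α) : ℕ := sInf {k | DPColorableAt G k}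

def DPDegreeColorable (G : FinHypergraph α) : Prop :=
  ∀ (X : α → Finset ℕ) (H : FinHypergraph ℕ),
    IsCover G X H → (∀ v ∈ G.verts, G.degree v ≤ (X v).card) → HasIT H G.verts X

def colNum (G : FinHypergraph α) : ℕ :=
  sInf {k | ∀ G' : FinHypergraph α, G'.IsSub G → G'.verts.Nonempty →
    ∃ v ∈ G'.verts, G'.degree v ≤ k}

def ProperColoring (G : FinHypergraph α) (φ : α → ℕ) : Prop :=
  ∀ e ∈ G.edges, ∃ u ∈ G.inc e, ∃ v ∈ G.inc e, φ u ≠ φ v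

def LColorable (G : FinHypergraph α) (L : α → Finset ℕ) : Prop :=
  ∃ φ : α → ℕ, ProperColoring G φ ∧ ∀ v ∈ G.verts, φ v ∈ L v

def chiList (G : FinHypergraph α) : ℕ :=
  sInf {k | ∀ L : α → Finset ℕ, (∀ v ∈ G.verts, k ≤ (L v).card) → LColorable G L}

def IsTKn (B : FinHypergraph α) (t n : ℕ) : Prop :=
  1 ≤ n ∧ B.verts.card = n ∧ (∀ e ∈ B.edges, (B.inc e).card = 2) ∧
  ∀ u ∈ B.verts, ∀ v ∈ B.verts, u ≠ v → B.mult u v = t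

def IsTCn (B : FinHypergraph α) (t n : ℕ) : Prop :=
  3 ≤ n ∧ B.verts.card = n ∧ (∀ e ∈ B.edges, (B.inc e).card = 2) ∧
  ∃ f : ℕ → α,
    B.verts = (Finset.range n).image f ∧
    (∀ i < n, ∀ j < n, i ≠ j → f i ≠ f j) ∧
    ∀ i < n, ∀ j < n, i ≠ j →
      B.mult (f i) (f j) = if j = (i + 1) % n ∨ i = (j + 1) % n then t else 0

def IsDPHyperbrick (B : FinHypergraph α) : Prop :=
  (∃ t n, 1 ≤ t ∧ 1 ≤ n ∧ IsTKn B t n) ∨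
  (∃ t n, 1 ≤ t ∧ 3 ≤ n ∧ IsTCn B t n) ∨
  (∃ e ∈ B.edges, B.verts = B.inc e ∧ B.edges = {e})

def AdjPair (G : FinHypergraph α) (u v : α) : Prop :=
  u ≠ v ∧ ∃ e ∈ G.edges, G.inc e = {u, v}

def IsKConfig (G : FinHypergraph α) (X : α → Finset β) (H : FinHypergraph β) (t n : ℕ) : Prop :=
  1 ≤ t ∧ 1 ≤ n ∧ IsTKn G t n ∧ IsCover G X H ∧
  ∃ P : α → ℕ → Finset β,
    (∀ v ∈ G.verts, ∀ i ∈ Finset.range (n - 1), ∀ j ∈ Finset.range (n - 1),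
      i ≠ j → Disjoint (P v i) (P v j)) ∧
    (∀ v ∈ G.verts, X v = (Finset.range (n - 1)).biUnion (P v)) ∧
    (∀ v ∈ G.verts, ∀ i ∈ Finset.range (n - 1), (P v i).card = t) ∧
    (∀ i ∈ Finset.range (n - 1), ∀ u ∈ G.verts, ∀ v ∈ G.verts, u ≠ v →
      ∀ x ∈ P u i, ∀ y ∈ P v i, ∃ e ∈ H.edges, H.inc e = {x, y}) ∧
    (∀ e ∈ H.edges, ∃ i ∈ Finset.range (n - 1), ∃ u ∈ G.verts, ∃ v ∈ G.verts,
      u ≠ v ∧ ∃ x ∈ P u i, ∃ y ∈ P v i, H.inc e = {x, y})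

def IsOddCConfig (G : FinHypergraph α) (X : α → Finset β) (H : FinHypergraph β) (t n : ℕ) : Prop :=
  1 ≤ t ∧ 5 ≤ n ∧ Odd n ∧ IsTCn G t n ∧ IsCover G X H ∧
  ∃ P : α → ℕ → Finset β,
    (∀ v ∈ G.verts, Disjoint (P v 0) (P v 1)) ∧
    (∀ v ∈ G.verts, X v = P v 0 ∪ P v 1) ∧
    (∀ v ∈ G.verts, (P v 0).card = t ∧ (P v 1).card = t) ∧
    (∀ i ∈ ({0, 1} : Finset ℕ), ∀ u ∈ G.verts, ∀ v ∈ G.verts, AdjPair G u v →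
      ∀ x ∈ P u i, ∀ y ∈ P v i, ∃ e ∈ H.edges, H.inc e = {x, y}) ∧
    (∀ e ∈ H.edges, ∃ i ∈ ({0, 1} : Finset ℕ), ∃ u ∈ G.verts, ∃ v ∈ G.verts,
      AdjPair G u v ∧ ∃ x ∈ P u i, ∃ y ∈ P v i, H.inc e = {x, y})

def IsEvenCConfig (G : FinHypergraph α) (X : α → Finset β) (H : FinHypergraph β) (t n : ℕ) : Prop :=
  1 ≤ t ∧ 4 ≤ n ∧ Even n ∧ IsTCn G t n ∧ IsCover G X H ∧
  ∃ P : α → ℕ → Finset β, ∃ w w' : α, w ∈ G.verts ∧ w' ∈ G.verts ∧ AdjPair G w w' ∧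
    (∀ v ∈ G.verts, Disjoint (P v 0) (P v 1)) ∧
    (∀ v ∈ G.verts, X v = P v 0 ∪ P v 1) ∧
    (∀ v ∈ G.verts, (P v 0).card = t ∧ (P v 1).card = t) ∧
    (∀ i ∈ ({0, 1} : Finset ℕ), ∀ u ∈ G.verts, ∀ v ∈ G.verts, AdjPair G u v →
      ({u, v} : Finset α) ≠ {w, w'} →
      ∀ x ∈ P u i, ∀ y ∈ P v i, ∃ e ∈ H.edges, H.inc e = {x, y}) ∧
    (∀ x ∈ P w 0, ∀ y ∈ P w' 1, ∃ e ∈ H.edges, H.inc e = {x, y}) ∧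
    (∀ x ∈ P w 1, ∀ y ∈ P w' 0, ∃ e ∈ H.edges, H.inc e = {x, y}) ∧
    (∀ e ∈ H.edges, ∃ x y : β, H.inc e = {x, y} ∧
      ((∃ i ∈ ({0, 1} : Finset ℕ), ∃ u ∈ G.verts, ∃ v ∈ G.verts,
        AdjPair G u v ∧ ({u, v} : Finset α) ≠ {w, w'} ∧ x ∈ P u i ∧ y ∈ P v i) ∨
       (x ∈ P w 0 ∧ y ∈ P w' 1) ∨ (x ∈ P w 1 ∧ y ∈ P w' 0)))

def IsEConfig (G : FinHypergraph α) (X : α → Finset β) (H : FinHypergraph β) : Prop :=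
  (∃ e₀ ∈ G.edges, G.edges = {e₀} ∧ G.verts = G.inc e₀) ∧
  IsCover G X H ∧ (∀ v ∈ G.verts, (X v).card = 1) ∧
  ∃ e₁ ∈ H.edges, H.edges = {e₁} ∧ H.inc e₁ = G.verts.biUnion X

def IsMergeOf (G : FinHypergraph α) (X : α → Finset β) (H : FinHypergraph β)
    (G₁ : FinHypergraph α) (X₁ : α → Finset β) (H₁ : FinHypergraph β)
    (G₂ : FinHypergraph α) (X₂ : α → Finset β) (H₂ : FinHypergraph β)
    (v₁ v₂ vs : α) : Prop :=
  Disjoint G₁.verts G₂.verts ∧ Disjoint G₁.edges G₂.edges ∧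
  Disjoint H₁.verts H₂.verts ∧ Disjoint H₁.edges H₂.edges ∧
  v₁ ∈ G₁.verts ∧ v₂ ∈ G₂.verts ∧ vs ∉ G₁.verts ∪ G₂.verts ∧
  G.verts = insert vs (((G₁.verts ∪ G₂.verts).erase v₁).erase v₂) ∧
  G.edges = G₁.edges ∪ G₂.edges ∧
  (∀ e ∈ G₁.edges, G.inc e =
    if v₁ ∈ G₁.inc e then insert vs ((G₁.inc e).erase v₁) else G₁.inc e) ∧
  (∀ e ∈ G₂.edges, G.inc e =
    if v₂ ∈ G₂.inc e then insert vs ((G₂.inc e).erase v₂) else G₂.inc e) ∧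
  H.verts = H₁.verts ∪ H₂.verts ∧ H.edges = H₁.edges ∪ H₂.edges ∧
  (∀ e ∈ H₁.edges, H.inc e = H₁.inc e) ∧ (∀ e ∈ H₂.edges, H.inc e = H₂.inc e) ∧
  X vs = X₁ v₁ ∪ X₂ v₂ ∧
  (∀ u ∈ G₁.verts.erase v₁, X u = X₁ u) ∧ (∀ u ∈ G₂.verts.erase v₂, X u = X₂ u)

inductive Constructible : FinHypergraph α → (α → Finset β) → FinHypergraph β → Prop where
  | K : ∀ {G : FinHypergraph α} {X : α → Finset β} {H : FinHypergraph β} {t n : ℕ},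
      IsKConfig G X H t n → Constructible G X H
  | Codd : ∀ {G : FinHypergraph α} {X : α → Finset β} {H : FinHypergraph β} {t n : ℕ},
      IsOddCConfig G X H t n → Constructible G X H
  | Ceven : ∀ {G : FinHypergraph α} {X : α → Finset β} {H : FinHypergraph β} {t n : ℕ},
      IsEvenCConfig G X H t n → Constructible G X H
  | E : ∀ {G : FinHypergraph α} {X : α → Finset β} {H : FinHypergraph β},
      IsEConfig G X H → Constructible G X H
  | merge : ∀ {G G₁ G₂ : FinHypergraph α} {X X₁ X₂ : α → Finset β} {H H₁ H₂ : FinHypergraph β}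
      {v₁ v₂ vs : α},
      Constructible G₁ X₁ H₁ → Constructible G₂ X₂ H₂ →
      IsMergeOf G X H G₁ X₁ H₁ G₂ X₂ H₂ v₁ v₂ vs → Constructible G X H

def reducedVerts (G : FinHypergraph α) (X : α → Finset β) (H : FinHypergraph β)
    (v : α) (x : β) : Finset β :=
  (G.shrink v).verts.biUnion (fun u => X u \ H.nbhd x)

def reduceH (G : FinHypergraph α) (X : α → Finset β) (H : FinHypergraph β)
    (v : α) (x : β) : FinHypergraph β where
  verts := reducedVerts G X H v x
  edges := H.edges.filter (fun e =>
    2 ≤ ((H.inc e).erase x).card ∧ (H.inc e).erase x ⊆ reducedVerts G X H v x)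
  inc := fun e => (H.inc e).erase x
  inc_sub := fun e he => (Finset.mem_filter.mp he).2.2
  inc_card := fun e he => (Finset.mem_filter.mp he).2.1

/-!
An independent transversal `T` of the merged cover splits into `T ∩ V(H¹)` and `T ∩ V(H²)`,
independent in `H¹` and `H²` and transversal away from `v¹` and `v²`; its single colour at `v*`
lies in `X¹_{v¹}` or in `X²_{v²}`, so one of the two pieces is a transversal of its part.
Conversely a transversal of one part, say the first, extends by an independent set of `H²` that
meets each `X²_u`, `u ≠ v²`, once and avoids `X²_{v²}`. Such a set exists in every connected
degree-feasible configuration: colour greedily, farthest from `v²` first. Hence the merge is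
colourable iff one part is, also after deleting a hyperedge, which lies in exactly one part;
minimal uncolourability of the merge is then equivalent to that of both parts.
-/

variable {V W : Type}

namespace FinHypergraph

variable {G : FinHypergraph V} {H : FinHypergraph W}

lemma Adj.symm {u v : V} (h : G.Adj u v) : G.Adj v u :=
  let ⟨huv, e, he, hu, hv⟩ := h
  ⟨huv.symm, e, he, hv, hu⟩

lemma indepSet_empty (H : FinHypergraph W) : H.IndepSet ∅ := fun e he hsub => by
  have := H.inc_card e he
  rw [subset_empty.1 hsub, card_empty] at this
  omega

lemma IndepSet.mono {S T : Finset W} (hT : H.IndepSet T) (hST : S ⊆ T) : H.IndepSet S :=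
  fun e he hS => hT e he (hS.trans hST)

lemma IndepSet.eraseEdge {T : Finset W} (hT : H.IndepSet T) (e₀ : ℕ) :
    (H.eraseEdge e₀).IndepSet T :=
  fun e he => hT e (mem_of_mem_erase he)

lemma IndepSet.exists_inc_subset_insert [DecidableEq W] {T : Finset W} {x : W}
    (hT : H.IndepSet T) (hx : ¬ H.IndepSet (insert x T)) :
    ∃ f ∈ H.edges, x ∈ H.inc f ∧ H.inc f ⊆ insert x T := by
  simp only [IndepSet, not_forall, not_not] at hx
  obtain ⟨f, hf, hsub⟩ := hx
  refine ⟨f, hf, by_contra fun hxf => hT f hf fun y hy => ?_, hsub⟩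
  exact (mem_insert.1 (hsub hy)).resolve_left (by rintro rfl; exact hxf hy)

lemma _root_.SimpleGraph.Reachable.exists_adj_dist_lt {R : SimpleGraph V} {u v : V}
    (hr : R.Reachable u v) (huv : u ≠ v) : ∃ w, R.Adj u w ∧ R.dist w v < R.dist u v := by
  obtain ⟨p, hp⟩ := hr.exists_walk_length_eq_dist
  cases p with
  | nil => exact absurd rfl huv
  | cons h q =>
    have := R.dist_le q
    rw [SimpleGraph.Walk.length_cons] at hp
    exact ⟨_, h, by omega⟩

lemma Connected.exists_adj_dist_lt (hG : G.Connected) {u v : V} (hu : u ∈ G.verts)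
    (hv : v ∈ G.verts) (huv : u ≠ v) :
    ∃ w, G.Adj u w ∧
      (SimpleGraph.fromRel G.Adj).dist w v < (SimpleGraph.fromRel G.Adj).dist u v := by
  have hr : (SimpleGraph.fromRel G.Adj).Reachable u v :=
    (SimpleGraph.reachable_iff_reflTransGen u v).2 <| Relation.ReflTransGen.mono
      (fun a b (h : G.Adj a b) => (SimpleGraph.fromRel_adj _ a b).2 ⟨h.1, Or.inl h⟩) _ _
      (hG u hu v hv)
  obtain ⟨w, hadj, hw⟩ := hr.exists_adj_dist_lt huv
  obtain ⟨-, h | h⟩ := (SimpleGraph.fromRel_adj _ u w).1 hadj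
  exacts [⟨w, h, hw⟩, ⟨w, h.symm, hw⟩]

end FinHypergraph

lemma exists_mem_inter_of_inc_subset_insert [DecidableEq W] {X : V → Finset W}
    {H : FinHypergraph W} {T : Finset W} {u w : V} {f : ℕ} {x : W}
    (hXwu : Disjoint (X w) (X u)) (hfw : (H.inc f ∩ X w).card = 1) (hx : x ∈ X u)
    (hsub : H.inc f ⊆ insert x T) : ∃ y ∈ H.inc f, y ∈ T ∩ X w := by
  obtain ⟨y, hy⟩ := card_pos.1 (hfw ▸ one_pos)
  obtain ⟨hyf, hyw⟩ := mem_inter.1 hy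
  refine ⟨y, hyf, mem_inter.2 ⟨(mem_insert.1 (hsub hyf)).resolve_left ?_, hyw⟩⟩
  rintro rfl
  exact disjoint_left.1 hXwu hyw hx

lemma eq_of_inc_subset_insert [DecidableEq W] {X : V → Finset W} {H : FinHypergraph W}
    {F : Finset ℕ} {T : Finset W} {u w : V} (hXwu : Disjoint (X w) (X u))
    (hFu : ∀ f ∈ F, (H.inc f ∩ X u).card = 1) (hFw : ∀ f ∈ F, (H.inc f ∩ X w).card = 1)
    (hF : ∀ f₁ ∈ F, ∀ f₂ ∈ F, f₁ ≠ f₂ → Disjoint (H.inc f₁) (H.inc f₂))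
    (hTw : (T ∩ X w).card ≤ 1) {f₁ f₂ : ℕ} {x₁ x₂ : W} (hf₁ : f₁ ∈ F) (hf₂ : f₂ ∈ F)
    (hx₁ : x₁ ∈ H.inc f₁ ∩ X u) (hx₂ : x₂ ∈ H.inc f₂ ∩ X u)
    (hsub₁ : H.inc f₁ ⊆ insert x₁ T) (hsub₂ : H.inc f₂ ⊆ insert x₂ T) : x₁ = x₂ := by
  by_cases hf : f₁ = f₂
  · subst hf
    exact card_le_one.1 (hFu f₁ hf₁).le _ hx₁ _ hx₂
  -- otherwise both hyperedges contain the unique point of `T` in `X w`, against disjointness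
  obtain ⟨y₁, hy₁, hy₁T⟩ :=
    exists_mem_inter_of_inc_subset_insert hXwu (hFw f₁ hf₁) (mem_inter.1 hx₁).2 hsub₁
  obtain ⟨y₂, hy₂, hy₂T⟩ :=
    exists_mem_inter_of_inc_subset_insert hXwu (hFw f₂ hf₂) (mem_inter.1 hx₂).2 hsub₂
  rw [card_le_one.1 hTw _ hy₁T _ hy₂T] at hy₁
  exact absurd (hF f₁ hf₁ f₂ hf₂ hf) (not_disjoint_iff.2 ⟨y₂, hy₁, hy₂⟩)

namespace IsCover

variable [DecidableEq W] {G : FinHypergraph V} {X : V → Finset W} {H : FinHypergraph W}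

lemma subset_verts (hC : IsCover G X H) : ∀ u ∈ G.verts, X u ⊆ H.verts :=
  fun _ hu => hC.2.1 ▸ subset_biUnion_of_mem X hu

/-- The hyperedges over an edge `e ∋ u` of `G` block at most one colour of `X u`, and those over
the edge to the uncoloured neighbour `w` block none; so at most `deg u - 1` colours are
blocked. -/
lemma exists_indepSet_insert [DecidableEq V] (hC : IsCover G X H) {u w : V} (hu : u ∈ G.verts)
    (hdeg : G.degree u ≤ (X u).card) (huw : G.Adj u w) {T : Finset W} (hT : H.IndepSet T)
    (hTw : T ∩ X w = ∅) (hT₁ : ∀ z ∈ G.verts, (T ∩ X z).card ≤ 1) :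
    ∃ x ∈ X u, H.IndepSet (insert x T) := by
  obtain ⟨hX, -, -, M, hM, hHM⟩ := hC
  obtain ⟨hne, e₀, he₀, hue₀, hwe₀⟩ := huw
  have hw : w ∈ G.verts := G.inc_sub e₀ he₀ hwe₀
  by_contra! hblock
  have hpick : ∀ x ∈ X u, ∃ e ∈ (G.edges.filter (u ∈ G.inc ·)).erase e₀,
      ∃ f ∈ M e, x ∈ H.inc f ∧ H.inc f ⊆ insert x T := by
    intro x hx
    obtain ⟨f, hf, hxf, hsub⟩ := hT.exists_inc_subset_insert (hblock x hx)
    obtain ⟨e, he, hfe⟩ := mem_biUnion.1 (hHM ▸ hf)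
    obtain ⟨-, hMe, -⟩ := hM e he
    obtain ⟨z, hze, hxz⟩ := mem_biUnion.1 ((hMe f hfe).2 hxf)
    have hzu : z = u := by_contra fun h =>
      disjoint_left.1 (hX z (G.inc_sub e he hze) u hu h) hxz hx
    refine ⟨e, mem_erase.2 ⟨?_, mem_filter.2 ⟨he, hzu ▸ hze⟩⟩, f, hfe, hxf, hsub⟩
    rintro rfl
    obtain ⟨y, -, hyT⟩ := exists_mem_inter_of_inc_subset_insert (hX w hw u hu hne.symm)
      ((hMe f hfe).1 w hwe₀) hx hsub
    rw [hTw] at hyT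
    exact notMem_empty y hyT
  choose! E hE F hF hxF hsubF using hpick
  have hinj : Set.InjOn E (X u) := by
    intro x₁ hx₁ x₂ hx₂ hE₁₂
    obtain ⟨he, hue⟩ := mem_filter.1 (mem_of_mem_erase (hE x₁ hx₁))
    obtain ⟨-, hMe, hMdisj⟩ := hM _ he
    obtain ⟨w', hw'e, hw'u⟩ := exists_mem_ne (G.inc_card _ he) u
    have hF₂ : F x₂ ∈ M (E x₁) := hE₁₂ ▸ hF x₂ hx₂
    exact eq_of_inc_subset_insert (hX w' (G.inc_sub _ he hw'e) u hu hw'u)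
      (fun f hf => (hMe f hf).1 u hue) (fun f hf => (hMe f hf).1 w' hw'e) hMdisj
      (hT₁ w' (G.inc_sub _ he hw'e)) (hF x₁ hx₁) hF₂ (mem_inter.2 ⟨hxF x₁ hx₁, hx₁⟩)
      (mem_inter.2 ⟨hxF x₂ hx₂, hx₂⟩) (hsubF x₁ hx₁) (hsubF x₂ hx₂)
  have hcard := card_le_card_of_injOn E hE hinj
  rw [card_erase_of_mem (mem_filter.2 ⟨he₀, hue₀⟩)] at hcard
  have hdeg_pos : 0 < G.degree u := card_pos.2 ⟨e₀, mem_filter.2 ⟨he₀, hue₀⟩⟩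
  unfold degree at hdeg hdeg_pos
  omega

end IsCover

def HasITAvoiding [DecidableEq W] (H : FinHypergraph W) (S : Finset V) (X : V → Finset W)
    (v : V) : Prop :=
  ∃ T : Finset W, H.IndepSet T ∧ ∀ u ∈ S, (T ∩ X u).card = if u = v then 0 else 1

lemma HasITAvoiding.eraseEdge [DecidableEq W] {H : FinHypergraph W} {S : Finset V}
    {X : V → Finset W} {v : V} (h : HasITAvoiding H S X v) (e : ℕ) :
    HasITAvoiding (H.eraseEdge e) S X v :=
  let ⟨T, hT, hTX⟩ := h
  ⟨T, hT.eraseEdge e, hTX⟩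

/-- Colour the vertices other than `v` greedily, farthest from `v` first: every vertex then
still has an uncoloured neighbour, one step closer to `v`, when its turn comes. -/
theorem hasITAvoiding_of_connected [DecidableEq V] [DecidableEq W] {G : FinHypergraph V}
    {X : V → Finset W} {H : FinHypergraph W} (hG : G.Connected) (hC : IsCover G X H)
    (hdeg : ∀ u ∈ G.verts, G.degree u ≤ (X u).card) {v : V} (hv : v ∈ G.verts) :
    HasITAvoiding H G.verts X v := by
  suffices h : ∀ S ⊆ G.verts.erase v, ∃ T, H.IndepSet T ∧
      ∀ z ∈ G.verts, (T ∩ X z).card = if z ∈ S then 1 else 0 by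
    obtain ⟨T, hT, hTX⟩ := h _ subset_rfl
    refine ⟨T, hT, fun z hz => ?_⟩
    rw [hTX z hz]
    by_cases hzv : z = v <;> simp [hzv, hz]
  intro S
  induction S using Finset.induction_on_min_value (fun u => (SimpleGraph.fromRel G.Adj).dist u v)
    with
  | empty => exact fun _ => ⟨∅, indepSet_empty H, by simp⟩
  | insert u S huS hmin ih =>
    intro hS
    obtain ⟨huv, hu⟩ := mem_erase.1 (hS (mem_insert_self u S))
    obtain ⟨T, hT, hTX⟩ := ih ((subset_insert u S).trans hS)
    obtain ⟨w, huw, hwu⟩ := hG.exists_adj_dist_lt hu hv huv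
    have hwS : w ∉ S := fun h => (hmin w h).not_gt hwu
    have hempty : ∀ z ∈ G.verts, z ∉ S → T ∩ X z = ∅ := fun z hz hzS =>
      card_eq_zero.1 (by rw [hTX z hz, if_neg hzS])
    obtain ⟨-, e, he, -, hwe⟩ := id huw
    obtain ⟨x, hx, hxT⟩ := hC.exists_indepSet_insert hu (hdeg u hu) huw hT
      (hempty w (G.inc_sub e he hwe) hwS) fun z hz => by rw [hTX z hz]; split_ifs <;> omega
    refine ⟨insert x T, hxT, fun z hz => ?_⟩
    by_cases hzu : z = u
    · subst hzu
      rw [insert_inter_of_mem hx, hempty z hz huS]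
      simp
    · rw [insert_inter_of_notMem fun hxz => disjoint_left.1 (hC.1 z hz u hu hzu) hxz hx, hTX z hz]
      simp only [mem_insert, hzu, false_or]

namespace IsMergeOf

variable [DecidableEq V] [DecidableEq W] {G G₁ G₂ : FinHypergraph V} {X X₁ X₂ : V → Finset W}
  {H H₁ H₂ : FinHypergraph W} {v₁ v₂ vs : V}

lemma symm (hm : IsMergeOf G X H G₁ X₁ H₁ G₂ X₂ H₂ v₁ v₂ vs) :
    IsMergeOf G X H G₂ X₂ H₂ G₁ X₁ H₁ v₂ v₁ vs := by
  obtain ⟨hG, hGe, hH, hHe, hv₁, hv₂, hvs, hV, hE, hinc₁, hinc₂, hHV, hHE, hHinc₁, hHinc₂, hXvs,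
    hX₁, hX₂⟩ := hm
  refine ⟨hG.symm, hGe.symm, hH.symm, hHe.symm, hv₂, hv₁, union_comm G₁.verts _ ▸ hvs, ?_,
    union_comm G₁.edges _ ▸ hE, hinc₂, hinc₁, union_comm H₁.verts _ ▸ hHV,
    union_comm H₁.edges _ ▸ hHE, hHinc₂, hHinc₁, union_comm (X₁ v₁) _ ▸ hXvs, hX₂, hX₁⟩
  rw [hV, union_comm, erase_right_comm]

lemma eraseEdge_left (hm : IsMergeOf G X H G₁ X₁ H₁ G₂ X₂ H₂ v₁ v₂ vs) {e : ℕ}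
    (he : e ∈ H₁.edges) :
    IsMergeOf G X (H.eraseEdge e) G₁ X₁ (H₁.eraseEdge e) G₂ X₂ H₂ v₁ v₂ vs := by
  obtain ⟨hG, hGe, hH, hHe, hv₁, hv₂, hvs, hV, hE, hinc₁, hinc₂, hHV, hHE, hHinc₁, hHinc₂, hXvs,
    hX₁, hX₂⟩ := hm
  refine ⟨hG, hGe, hH, hHe.mono_left (erase_subset e _), hv₁, hv₂, hvs, hV, hE, hinc₁, hinc₂, hHV,
    ?_, fun f hf => hHinc₁ f (mem_of_mem_erase hf), hHinc₂, hXvs, hX₁, hX₂⟩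
  change H.edges.erase e = H₁.edges.erase e ∪ H₂.edges
  rw [hHE, erase_union_distrib, erase_eq_of_notMem (disjoint_left.1 hHe he)]

lemma eraseEdge_right (hm : IsMergeOf G X H G₁ X₁ H₁ G₂ X₂ H₂ v₁ v₂ vs) {e : ℕ}
    (he : e ∈ H₂.edges) :
    IsMergeOf G X (H.eraseEdge e) G₁ X₁ H₁ G₂ X₂ (H₂.eraseEdge e) v₁ v₂ vs :=
  (hm.symm.eraseEdge_left he).symm

lemma vs_mem_verts (hm : IsMergeOf G X H G₁ X₁ H₁ G₂ X₂ H₂ v₁ v₂ vs) : vs ∈ G.verts := by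
  obtain ⟨-, -, -, -, -, -, -, hV, -⟩ := hm
  exact hV ▸ mem_insert_self _ _

lemma mem_verts_of_mem_left (hm : IsMergeOf G X H G₁ X₁ H₁ G₂ X₂ H₂ v₁ v₂ vs) {u : V}
    (hu : u ∈ G₁.verts.erase v₁) : u ∈ G.verts := by
  obtain ⟨hG, -, -, -, -, hv₂, -, hV, -⟩ := hm
  obtain ⟨huv₁, hu⟩ := mem_erase.1 hu
  rw [hV]
  exact mem_insert_of_mem (mem_erase.2 ⟨fun h => disjoint_left.1 hG hu (h ▸ hv₂),
    mem_erase.2 ⟨huv₁, mem_union_left _ hu⟩⟩)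

lemma mem_verts (hm : IsMergeOf G X H G₁ X₁ H₁ G₂ X₂ H₂ v₁ v₂ vs) {z : V} (hz : z ∈ G.verts) :
    z = vs ∨ z ∈ G₁.verts.erase v₁ ∨ z ∈ G₂.verts.erase v₂ := by
  obtain ⟨-, -, -, -, -, -, -, hV, -⟩ := hm
  rw [hV] at hz
  simp only [mem_insert, mem_erase, mem_union] at hz ⊢
  tauto

lemma indepSet_iff (hm : IsMergeOf G X H G₁ X₁ H₁ G₂ X₂ H₂ v₁ v₂ vs) {T : Finset W} :
    H.IndepSet T ↔ H₁.IndepSet (T ∩ H₁.verts) ∧ H₂.IndepSet (T ∩ H₂.verts) := by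
  obtain ⟨-, -, -, -, -, -, -, -, -, -, -, -, hHE, hHinc₁, hHinc₂, -⟩ := hm
  simp only [IndepSet, hHE, mem_union, or_imp, forall_and]
  refine and_congr (forall₂_congr fun f hf => ?_) (forall₂_congr fun f hf => ?_)
  · rw [hHinc₁ f hf, subset_inter_iff, and_iff_left (H₁.inc_sub f hf)]
  · rw [hHinc₂ f hf, subset_inter_iff, and_iff_left (H₂.inc_sub f hf)]

lemma card_inter_vs (hm : IsMergeOf G X H G₁ X₁ H₁ G₂ X₂ H₂ v₁ v₂ vs)
    (hX₁ : ∀ z ∈ G₁.verts, X₁ z ⊆ H₁.verts) (hX₂ : ∀ z ∈ G₂.verts, X₂ z ⊆ H₂.verts)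
    (T : Finset W) : (T ∩ X vs).card = (T ∩ X₁ v₁).card + (T ∩ X₂ v₂).card := by
  obtain ⟨-, -, hH, -, hv₁, hv₂, -, -, -, -, -, -, -, -, -, hXvs, -⟩ := hm
  rw [hXvs, inter_union_distrib_left, card_union_of_disjoint]
  exact (hH.mono (hX₁ v₁ hv₁) (hX₂ v₂ hv₂)).mono inter_subset_right inter_subset_right

lemma hasIT_left (hm : IsMergeOf G X H G₁ X₁ H₁ G₂ X₂ H₂ v₁ v₂ vs)
    (hX₁ : ∀ z ∈ G₁.verts, X₁ z ⊆ H₁.verts) {T : Finset W} (hT : H.IndepSet T)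
    (hTX : ∀ z ∈ G.verts, (T ∩ X z).card = 1) (hTv₁ : (T ∩ X₁ v₁).card = 1) :
    HasIT H₁ G₁.verts X₁ := by
  obtain ⟨-, -, -, -, -, -, -, -, -, -, -, -, -, -, -, -, hXz₁, -⟩ := id hm
  refine ⟨T ∩ H₁.verts, (hm.indepSet_iff.1 hT).1, fun z hz => ?_⟩
  rw [inter_assoc, inter_eq_right.2 (hX₁ z hz)]
  by_cases hzv : z = v₁
  · exact hzv ▸ hTv₁
  · have hz' : z ∈ G₁.verts.erase v₁ := mem_erase.2 ⟨hzv, hz⟩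
    rw [← hXz₁ z hz']
    exact hTX z (hm.mem_verts_of_mem_left hz')

lemma hasIT_of_hasIT_left (hm : IsMergeOf G X H G₁ X₁ H₁ G₂ X₂ H₂ v₁ v₂ vs)
    (hX₁ : ∀ z ∈ G₁.verts, X₁ z ⊆ H₁.verts) (hX₂ : ∀ z ∈ G₂.verts, X₂ z ⊆ H₂.verts)
    (h₁ : HasIT H₁ G₁.verts X₁) (h₂ : HasITAvoiding H₂ G₂.verts X₂ v₂) :
    HasIT H G.verts X := by
  obtain ⟨T₁, hT₁, hT₁X⟩ := h₁
  obtain ⟨T₂, hT₂, hT₂X⟩ := h₂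
  obtain ⟨-, -, hH, -, hv₁, hv₂, -, -, -, -, -, -, -, -, -, -, hXz₁, hXz₂⟩ := id hm
  set T := T₁ ∩ H₁.verts ∪ T₂ ∩ H₂.verts
  have hT₁' : T ∩ H₁.verts = T₁ ∩ H₁.verts := by
    rw [union_inter_distrib_right, inter_assoc, inter_self,
      disjoint_iff_inter_eq_empty.1 (hH.symm.mono_left inter_subset_right), union_empty]
  have hT₂' : T ∩ H₂.verts = T₂ ∩ H₂.verts := by
    rw [union_inter_distrib_right, inter_assoc T₂, inter_self,
      disjoint_iff_inter_eq_empty.1 (hH.mono_left inter_subset_right), empty_union]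
  have restrict : ∀ {T' S Y : Finset W}, T ∩ S = T' ∩ S → Y ⊆ S → T ∩ Y = T' ∩ Y :=
    fun h hY => by rw [← inter_eq_right.2 hY, ← inter_assoc, h, inter_assoc]
  refine ⟨T, hm.indepSet_iff.2 ⟨hT₁' ▸ hT₁.mono inter_subset_left,
    hT₂' ▸ hT₂.mono inter_subset_left⟩, fun z hz => ?_⟩
  rcases hm.mem_verts hz with rfl | hz | hz
  · rw [hm.card_inter_vs hX₁ hX₂, restrict hT₁' (hX₁ v₁ hv₁), restrict hT₂' (hX₂ v₂ hv₂),
      hT₁X v₁ hv₁, hT₂X v₂ hv₂, if_pos rfl]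
  · rw [hXz₁ z hz, restrict hT₁' (hX₁ z (mem_of_mem_erase hz)), hT₁X z (mem_of_mem_erase hz)]
  · rw [hXz₂ z hz, restrict hT₂' (hX₂ z (mem_of_mem_erase hz)), hT₂X z (mem_of_mem_erase hz),
      if_neg (ne_of_mem_erase hz)]

theorem hasIT_iff (hm : IsMergeOf G X H G₁ X₁ H₁ G₂ X₂ H₂ v₁ v₂ vs)
    (hX₁ : ∀ z ∈ G₁.verts, X₁ z ⊆ H₁.verts) (hX₂ : ∀ z ∈ G₂.verts, X₂ z ⊆ H₂.verts)
    (hA₁ : HasITAvoiding H₁ G₁.verts X₁ v₁) (hA₂ : HasITAvoiding H₂ G₂.verts X₂ v₂) :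
    HasIT H G.verts X ↔ HasIT H₁ G₁.verts X₁ ∨ HasIT H₂ G₂.verts X₂ := by
  refine ⟨fun ⟨T, hT, hTX⟩ => ?_, ?_⟩
  · have hsum := hm.card_inter_vs hX₁ hX₂ T
    rw [hTX vs hm.vs_mem_verts] at hsum
    by_cases h : (T ∩ X₁ v₁).card = 1
    · exact Or.inl (hm.hasIT_left hX₁ hT hTX h)
    · exact Or.inr (hm.symm.hasIT_left hX₂ hT hTX (by omega))
  · rintro (h | h)
    · exact hm.hasIT_of_hasIT_left hX₁ hX₂ h hA₂
    · exact hm.symm.hasIT_of_hasIT_left hX₂ hX₁ h hA₁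

end IsMergeOf

/-- a merge of two disjoint degree-feasible configurations is minimal
uncolorable iff both of them are. -/
theorem merge_minUncol_iff (G G₁ G₂ : FinHypergraph α) (X X₁ X₂ : α → Finset β)
    (H H₁ H₂ : FinHypergraph β) (v₁ v₂ vs : α)
    (h1 : G₁.Connected) (hC1 : IsCover G₁ X₁ H₁)
    (hd1 : ∀ v ∈ G₁.verts, G₁.degree v ≤ (X₁ v).card)
    (h2 : G₂.Connected) (hC2 : IsCover G₂ X₂ H₂)
    (hd2 : ∀ v ∈ G₂.verts, G₂.degree v ≤ (X₂ v).card)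
    (hm : IsMergeOf G X H G₁ X₁ H₁ G₂ X₂ H₂ v₁ v₂ vs) :
    MinUncol H G.verts X ↔ MinUncol H₁ G₁.verts X₁ ∧ MinUncol H₂ G₂.verts X₂ := by
  obtain ⟨-, -, -, -, hv₁, hv₂, -, -, -, -, -, -, hHE, -⟩ := id hm
  have hA₁ := hasITAvoiding_of_connected h1 hC1 hd1 hv₁
  have hA₂ := hasITAvoiding_of_connected h2 hC2 hd2 hv₂
  have hIT := hm.hasIT_iff hC1.subset_verts hC2.subset_verts hA₁ hA₂
  have hIT₁ : ∀ e ∈ H₁.edges, HasIT (H.eraseEdge e) G.verts X ↔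
      HasIT (H₁.eraseEdge e) G₁.verts X₁ ∨ HasIT H₂ G₂.verts X₂ := fun e he =>
    (hm.eraseEdge_left he).hasIT_iff hC1.subset_verts hC2.subset_verts (hA₁.eraseEdge e) hA₂
  have hIT₂ : ∀ e ∈ H₂.edges, HasIT (H.eraseEdge e) G.verts X ↔
      HasIT H₁ G₁.verts X₁ ∨ HasIT (H₂.eraseEdge e) G₂.verts X₂ := fun e he =>
    (hm.eraseEdge_right he).hasIT_iff hC1.subset_verts hC2.subset_verts hA₁ (hA₂.eraseEdge e)
  simp only [MinUncol, hIT, not_or, hHE, mem_union]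
  constructor
  · rintro ⟨⟨hn₁, hn₂⟩, hmin⟩
    exact ⟨⟨hn₁, fun e he => ((hIT₁ e he).1 (hmin e (Or.inl he))).resolve_right hn₂⟩,
      hn₂, fun e he => ((hIT₂ e he).1 (hmin e (Or.inr he))).resolve_left hn₁⟩
  · rintro ⟨⟨hn₁, hmin₁⟩, hn₂, hmin₂⟩
    refine ⟨⟨hn₁, hn₂⟩, fun e he => he.elim (fun he => ?_) fun he => ?_⟩
    · exact (hIT₁ e he).2 (Or.inl (hmin₁ e he))
    · exact (hIT₂ e he).2 (Or.inr (hmin₂ e he))
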